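/- Let W = W_{m,n} with m > 1, and suppose M is a simple weight W-module, v ∈ M is a nonzero vector, and α ∈ ℕ^m (all coordinates positive). If W_{-α}·v = 0 and additionally there exists N ∈ ℕ with W_{e_i + Nα}·v = 0 for i = 1,...,m, then W·v = 0, i.e., v spans a trivial submodule; consequently if M is simple and not one-dimensional-trivial, then W_{-α}v ≠ 0 for every nonzero v ∈ M satisfying the vanishing hypothesis on W_{e_i+Nα}. -/

import Mathlib

/-! ### A concrete model of `A_{m,n}` and of the Witt superalgebra `W_{m,n}`

`A_{m,n} = ℂ[t₁^{±1},…,t_m^{±1}] ⊗ Λ(ξ₁,…,ξ_n)` has basis the monomials `t^α ξ_I`,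
indexed by `AIdx m n = (Fin m → ℤ) × Finset (Fin n)`.  The Witt superalgebra
`W_{m,n}` of superderivations of `A_{m,n}` has basis `t^α ξ_I d_i` and
`t^α ξ_I ∂/∂ξ_j` (`d_i = t_i ∂/∂t_i`), indexed by
`WIdx m n = (Fin m → ℤ) × Finset (Fin n) × (Fin m ⊕ Fin n)`. -/

/-- Inversion count: number of pairs `(a,b) ∈ I × J` with `a > b`. -/
def tauF {n : ℕ} (I J : Finset (Fin n)) : ℕ :=
  ((I ×ˢ J).filter fun p => p.2 < p.1).card

/-- The sign arising from `ξ_I · ξ_J = ε(I,J) ξ_{I ∪ J}`:  `(-1)^{τ(I,J)}` when `I, J`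
are disjoint and `0` otherwise. -/
noncomputable def epsF {n : ℕ} (I J : Finset (Fin n)) : ℂ :=
  if Disjoint I J then (-1 : ℂ) ^ tauF I J else 0

/-- Index set of the monomial basis `t^α ξ_I` of `A_{m,n}`. -/
abbrev AIdx (m n : ℕ) := (Fin m → ℤ) × Finset (Fin n)

/-- The underlying vector space of `A_{m,n}`. -/
abbrev ASp (m n : ℕ) := AIdx m n →₀ ℂ

/-- Index set of the basis `t^α ξ_I ∂` (`∂ = d_i` or `∂/∂ξ_j`) of `W_{m,n}`. -/
abbrev WIdx (m n : ℕ) := (Fin m → ℤ) × Finset (Fin n) × (Fin m ⊕ Fin n)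

/-- The underlying vector space of `W_{m,n}`. -/
abbrev WSp (m n : ℕ) := WIdx m n →₀ ℂ

/-- Product of two monomials of `A_{m,n}`. -/
noncomputable def mulMono {m n : ℕ} (u v : AIdx m n) : ASp m n :=
  epsF u.2 v.2 • Finsupp.single (u.1 + v.1, u.2 ∪ v.2) 1

/-- The (supercommutative) multiplication of `A_{m,n}`, as a bilinear map. -/
noncomputable def mulA (m n : ℕ) : ASp m n →ₗ[ℂ] ASp m n →ₗ[ℂ] ASp m n :=
  Finsupp.lsum ℂ fun u => LinearMap.toSpanSingleton ℂ _
    (Finsupp.lsum ℂ fun v => LinearMap.toSpanSingleton ℂ _ (mulMono u v))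

/-- A monomial of `A_{m,n}` multiplied with a basis element of `W_{m,n}`. -/
noncomputable def smulMonoW {m n : ℕ} (u : AIdx m n) (w : WIdx m n) : WSp m n :=
  epsF u.2 w.2.1 • Finsupp.single (u.1 + w.1, u.2 ∪ w.2.1, w.2.2) 1

/-- The action of `A_{m,n}` on `W_{m,n} = A_{m,n} Δ` by multiplication, bilinear. -/
noncomputable def smulAW (m n : ℕ) : ASp m n →ₗ[ℂ] WSp m n →ₗ[ℂ] WSp m n :=
  Finsupp.lsum ℂ fun u => LinearMap.toSpanSingleton ℂ _
    (Finsupp.lsum ℂ fun w => LinearMap.toSpanSingleton ℂ _ (smulMonoW u w))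

/-- The scalar produced when the derivation part `c` (`d_i` or `∂/∂ξ_j`) hits the
monomial `t^β ξ_J`. -/
noncomputable def dCoeff {m n : ℕ} (c : Fin m ⊕ Fin n) (β : Fin m → ℤ) (J : Finset (Fin n)) : ℂ :=
  match c with
  | Sum.inl i => (β i : ℂ)
  | Sum.inr j => if j ∈ J then (-1 : ℂ) ^ ((J.filter (· < j)).card) else 0

/-- The `ξ`-part of the monomial after applying the derivation part `c`. -/
def dSet {m n : ℕ} (c : Fin m ⊕ Fin n) (J : Finset (Fin n)) : Finset (Fin n) :=
  match c with
  | Sum.inl _ => J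
  | Sum.inr j => J.erase j

/-- The basis superderivation `t^α ξ_I ∂` (index `u`) applied to the monomial
`t^β ξ_J` (index `v`), as an element of `A_{m,n}`. -/
noncomputable def derMono {m n : ℕ} (u : WIdx m n) (v : AIdx m n) : ASp m n :=
  dCoeff u.2.2 v.1 v.2 • mulMono (u.1, u.2.1) (v.1, dSet u.2.2 v.2)

/-- The parity of a basis element `t^α ξ_I ∂` of `W_{m,n}`: `|I|` plus the parity of
the derivation part. -/
def parWIdx {m n : ℕ} (u : WIdx m n) : ℕ :=
  u.2.1.card + (match u.2.2 with | Sum.inl _ => 0 | Sum.inr _ => 1)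

/-- Attach a derivation part `b` to an element of `A_{m,n}`: `a ↦ a ∂_b`. -/
noncomputable def attachD {m n : ℕ} (b : Fin m ⊕ Fin n) : ASp m n →ₗ[ℂ] WSp m n :=
  Finsupp.lmapDomain ℂ ℂ (fun a => (a.1, a.2, b))

/-- The superbracket of two basis elements `x = t^α ξ_I ∂_a`, `y = t^β ξ_J ∂_b`:
`[x, y] = x(t^β ξ_J) ∂_b − (−1)^{|x||y|} y(t^α ξ_I) ∂_a`. -/
noncomputable def bracketMono {m n : ℕ} (u v : WIdx m n) : WSp m n :=
  attachD v.2.2 (derMono u (v.1, v.2.1)) -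
    ((-1 : ℂ) ^ (parWIdx u * parWIdx v)) • attachD u.2.2 (derMono v (u.1, u.2.1))

/-- The superbracket of `W_{m,n}`, as a bilinear map. -/
noncomputable def bracketW (m n : ℕ) : WSp m n →ₗ[ℂ] WSp m n →ₗ[ℂ] WSp m n :=
  Finsupp.lsum ℂ fun u => LinearMap.toSpanSingleton ℂ _
    (Finsupp.lsum ℂ fun v => LinearMap.toSpanSingleton ℂ _ (bracketMono u v))

/-- The `ℤ^m`-graded component `(W_{m,n})_α`, spanned by `t^α ξ_I d_i` and
`t^α ξ_I ∂/∂ξ_j`. -/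
noncomputable def Wgr (m n : ℕ) (α : Fin m → ℤ) : Submodule ℂ (WSp m n) :=
  Submodule.span ℂ
    {w | ∃ (I : Finset (Fin n)) (c : Fin m ⊕ Fin n), w = Finsupp.single (α, I, c) 1}

/-- The (`ℤ₂`-)homogeneous component of `W_{m,n}` of parity `p`. -/
noncomputable def Wpar (m n : ℕ) (p : ℕ) : Submodule ℂ (WSp m n) :=
  Submodule.span ℂ
    {w | ∃ u : WIdx m n, parWIdx u % 2 = p % 2 ∧ w = Finsupp.single u 1}

/-!
The degrees `γ` with `W_γ · v = 0` form a subset `S` of `ℤ^m` that contains `μ + β` whenever it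
contains two distinct `μ, β`: for a coordinate with `μ i ≠ β i` (say `β i ≠ 0`), bracketing
`t^μ d_i` against `W_β` gives every basis vector of `W_{μ+β}` with the nonzero coefficient `β i`.
Adding `-α` repeatedly turns `e_p + Nα ∈ S` into `e_p + kα ∈ S` for all `k ≤ N`; here `m > 1`
keeps `e_p + kα` away from `-α`. Adding the `e_p + kα` one unit vector at a time, with `k` chosen so
that the two summands differ, gives `e_a + e_b + d + Kα ∈ S` for all `d ≥ 0` and `K ≤ N`, and every
`γ` is of this form. Hence `W · v = 0`, so `ℂ v` is a graded submodule, and simplicity leaves only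
`v = 0` once the action is nontrivial.
-/

theorem bracketW_single {m n : ℕ} (u w : WIdx m n) :
    bracketW m n (Finsupp.single u 1) (Finsupp.single w 1) = bracketMono u w := by
  simp [bracketW, Finsupp.lsum_single, LinearMap.toSpanSingleton_apply]

theorem bracketMono_inl_inl {m n : ℕ} (μ β : Fin m → ℤ) (i j : Fin m) (J : Finset (Fin n)) :
    bracketMono ((μ, ∅, Sum.inl i) : WIdx m n) (β, J, Sum.inl j) =
      (β i : ℂ) • Finsupp.single (μ + β, J, Sum.inl j) 1 -
      (μ j : ℂ) • Finsupp.single (μ + β, J, Sum.inl i) 1 := by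
  simp [bracketMono, derMono, dCoeff, dSet, mulMono, epsF, tauF, attachD, parWIdx,
    Finsupp.mapDomain_single, add_comm β μ]

theorem bracketMono_inl_inr {m n : ℕ} (μ β : Fin m → ℤ) (i : Fin m) (j : Fin n)
    (J : Finset (Fin n)) :
    bracketMono ((μ, ∅, Sum.inl i) : WIdx m n) (β, J, Sum.inr j) =
      (β i : ℂ) • Finsupp.single (μ + β, J, Sum.inr j) 1 := by
  simp [bracketMono, derMono, dCoeff, dSet, mulMono, epsF, tauF, attachD, parWIdx,
    Finsupp.mapDomain_single, add_comm β μ]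

section Representation

variable {m n : ℕ} {V : Type*} [AddCommGroup V] [Module ℂ V]

def RespectsSuperbracket (ρ : WSp m n →ₗ[ℂ] Module.End ℂ V) : Prop :=
  ∀ (p q : ℕ) (x y : WSp m n), x ∈ Wpar m n p → y ∈ Wpar m n q →
    ρ (bracketW m n x y) = ρ x * ρ y - ((-1 : ℂ) ^ (p * q)) • (ρ y * ρ x)

/-- `W_γ · v = 0`, tested on the basis `t^γ ξ_I ∂` of `W_γ`. -/
def Annihilates (ρ : WSp m n →ₗ[ℂ] Module.End ℂ V) (v : V) (γ : Fin m → ℤ) : Prop :=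
  ∀ (I : Finset (Fin n)) (c : Fin m ⊕ Fin n), ρ (Finsupp.single (γ, I, c) 1) v = 0

variable {ρ : WSp m n →ₗ[ℂ] Module.End ℂ V} {v : V}

theorem RespectsSuperbracket.bracketMono_apply_eq_zero (hρ : RespectsSuperbracket ρ)
    {u w : WIdx m n} (hu : ρ (Finsupp.single u 1) v = 0) (hw : ρ (Finsupp.single w 1) v = 0) :
    ρ (bracketMono u w) v = 0 := by
  rw [← bracketW_single, hρ (parWIdx u) (parWIdx w) _ _ (Submodule.subset_span ⟨u, rfl, rfl⟩)
    (Submodule.subset_span ⟨w, rfl, rfl⟩)]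
  simp [Module.End.mul_apply, hu, hw]

/-- Bracketing with `t^μ d_i` multiplies `t^β ξ_I ∂` by `β i`, up to a multiple of
`t^{μ+β} ξ_I d_i`, which is itself killed because `μ i ≠ β i`. -/
theorem Annihilates.add_of_ne_zero (hρ : RespectsSuperbracket ρ) {μ β : Fin m → ℤ}
    (hμ : Annihilates ρ v μ) (hβ : Annihilates ρ v β) {i : Fin m} (hne : μ i ≠ β i)
    (hβi : β i ≠ 0) : Annihilates ρ v (μ + β) := by
  have hβi' : (β i : ℂ) ≠ 0 := by exact_mod_cast hβi
  intro I c
  have hdiag : ρ (Finsupp.single (μ + β, I, Sum.inl i) 1) v = 0 := by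
    have h := hρ.bracketMono_apply_eq_zero (hμ ∅ (Sum.inl i)) (hβ I (Sum.inl i))
    rw [bracketMono_inl_inl, ← sub_smul, map_smul, LinearMap.smul_apply] at h
    exact (smul_eq_zero.1 h).resolve_left (sub_ne_zero.2 (by exact_mod_cast hne.symm))
  rcases c with j | j
  · have h := hρ.bracketMono_apply_eq_zero (hμ ∅ (Sum.inl i)) (hβ I (Sum.inl j))
    rw [bracketMono_inl_inl, map_sub, map_smul, map_smul, LinearMap.sub_apply,
      LinearMap.smul_apply, LinearMap.smul_apply, hdiag, smul_zero, sub_zero] at h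
    exact (smul_eq_zero.1 h).resolve_left hβi'
  · have h := hρ.bracketMono_apply_eq_zero (hμ ∅ (Sum.inl i)) (hβ I (Sum.inr j))
    rw [bracketMono_inl_inr, map_smul, LinearMap.smul_apply] at h
    exact (smul_eq_zero.1 h).resolve_left hβi'

theorem Annihilates.add (hρ : RespectsSuperbracket ρ) {μ β : Fin m → ℤ}
    (hμ : Annihilates ρ v μ) (hβ : Annihilates ρ v β) (hne : μ ≠ β) :
    Annihilates ρ v (μ + β) := by
  obtain ⟨i, hi⟩ := Function.ne_iff.1 hne
  by_cases hβi : β i = 0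
  · rw [add_comm]
    exact hβ.add_of_ne_zero hρ hμ (Ne.symm hi) (by rwa [hβi] at hi)
  · exact hμ.add_of_ne_zero hρ hβ hi hβi

theorem apply_eq_zero_of_forall_annihilates (h : ∀ γ, Annihilates ρ v γ) (x : WSp m n) :
    ρ x v = 0 := by
  induction x using Finsupp.induction_linear with
  | zero => simp
  | add f g hf hg => simp [hf, hg]
  | single u t =>
    rw [← mul_one t, ← smul_eq_mul, ← Finsupp.smul_single, map_smul, LinearMap.smul_apply,
      h u.1 u.2.1 u.2.2, smul_zero]

end Representation

section Generation

variable {ι : Type*}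

def IsClosedUnderDistinctAdd {M : Type*} [Add M] (S : Set M) : Prop :=
  ∀ μ ∈ S, ∀ β ∈ S, μ ≠ β → μ + β ∈ S

def RayIn (S : Set (ι → ℤ)) (α : ι → ℤ) (N : ℤ) (c : ι → ℤ) : Prop :=
  ∀ K ≤ N, c + K • α ∈ S

variable {S : Set (ι → ℤ)} {α : ι → ℤ} {N : ℤ}

/-- Split `c + d + K • α` as `(c + (K - N) • α) + (d + N • α)`; if these two coincide, move one
`α` across. Comparing coordinate `q` shows the second split is distinct and within the bound. -/
theorem RayIn.add (hS : IsClosedUnderDistinctAdd S) (hN : 0 ≤ N) {c d : ι → ℤ} {q : ι}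
    (hαq : 0 < α q) (hc : RayIn S α N c) (hd : RayIn S α N d) (hdc : d q < c q) :
    RayIn S α N (c + d) := by
  intro K hK
  by_cases h : c + (K - N) • α = d + N • α
  · have hq := congrFun h q
    simp only [Pi.add_apply, Pi.smul_apply, smul_eq_mul] at hq
    have hKN : K - N + 1 ≤ N := by nlinarith
    have hne : c + (K - N + 1) • α ≠ d + (N - 1) • α := fun h' => by
      have hq' := congrFun h' q
      simp only [Pi.add_apply, Pi.smul_apply, smul_eq_mul] at hq'
      linarith
    convert hS _ (hc _ hKN) _ (hd _ (by omega)) hne using 1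
    module
  · convert hS _ (hc _ (by omega)) _ (hd N le_rfl) h using 1
    module

variable [DecidableEq ι]

theorem rayIn_single (hS : IsClosedUnderDistinctAdd S) {p j : ι} (hjp : j ≠ p) (hαj : α j ≠ 0)
    (hneg : -α ∈ S) (htop : Pi.single p 1 + N • α ∈ S) : RayIn S α N (Pi.single p 1) := by
  refine Int.leInductionDown htop fun k _ hk => ?_
  have hne : Pi.single p 1 + k • α ≠ -α := fun h => by
    have hj := congrFun h j
    have hp := congrFun h p
    simp only [Pi.add_apply, Pi.smul_apply, Pi.neg_apply, smul_eq_mul, Pi.single_eq_same,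
      Pi.single_eq_of_ne hjp, zero_add] at hj hp
    have hk : k = -1 := by
      have : (k + 1) * α j = 0 := by linarith
      linarith [(mul_eq_zero.1 this).resolve_right hαj]
    subst hk
    linarith
  convert hS _ hk _ hneg hne using 1
  module

variable [Fintype ι]

theorem RayIn.add_nonneg (hS : IsClosedUnderDistinctAdd S) (hN : 0 ≤ N) (hα : ∀ i, 0 < α i)
    (hsingle : ∀ p, RayIn S α N (Pi.single p 1)) {c : ι → ℤ} (hc : RayIn S α N c)
    (hcpos : ∀ p, ∃ q ≠ p, 0 < c q) {d : ι → ℤ} (hd : 0 ≤ d) : RayIn S α N (c + d) := by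
  obtain ⟨n, hn⟩ : ∃ n : ℕ, ∑ i, d i = n :=
    ⟨_, (Int.toNat_of_nonneg (Finset.sum_nonneg fun i _ => hd i)).symm⟩
  induction n generalizing d with
  | zero =>
    have hd0 : d = 0 := funext fun i =>
      (Finset.sum_eq_zero_iff_of_nonneg fun i _ => hd i).1 hn i (Finset.mem_univ i)
    simpa [hd0] using hc
  | succ n ih =>
    obtain ⟨p, hp⟩ : ∃ p, 0 < d p := by
      by_contra! h
      have := Finset.sum_nonpos fun i (_ : i ∈ Finset.univ) => h i
      omega
    obtain ⟨q, hqp, hq⟩ := hcpos p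
    have hd' : 0 ≤ d - Pi.single p 1 := fun i => by
      rcases eq_or_ne i p with rfl | hip
      · simp; omega
      · simpa [hip] using hd i
    have hn' : ∑ i, (d - Pi.single p 1 : ι → ℤ) i = n := by
      simp [Finset.sum_sub_distrib, hn]
    have hq' : (Pi.single p 1 : ι → ℤ) q < (c + (d - Pi.single p 1) : ι → ℤ) q := by
      simpa [hqp] using add_pos_of_pos_of_nonneg hq (hd' q)
    convert (ih hd' hn').add hS hN (hα q) (hsingle p) hq' using 1
    abel

theorem eq_univ_of_isClosedUnderDistinctAdd [Nontrivial ι] (hS : IsClosedUnderDistinctAdd S)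
    (hN : 0 ≤ N) (hα : ∀ i, 0 < α i) (hneg : -α ∈ S)
    (htop : ∀ i, Pi.single i 1 + N • α ∈ S) : S = Set.univ := by
  have hsingle (p : ι) : RayIn S α N (Pi.single p 1) := by
    obtain ⟨j, hjp⟩ := exists_ne p
    exact rayIn_single hS hjp (hα j).ne' hneg (htop p)
  obtain ⟨a, b, hab⟩ := exists_pair_ne ι
  have hpair : RayIn S α N (Pi.single a 1 + Pi.single b 1) :=
    (hsingle a).add hS hN (hα a) (hsingle b) (by simp [hab])
  have hpair_pos (p : ι) : ∃ q ≠ p, 0 < (Pi.single a 1 + Pi.single b 1 : ι → ℤ) q := by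
    rcases eq_or_ne a p with rfl | hap
    · exact ⟨b, hab.symm, by simp [hab]⟩
    · exact ⟨a, hap, by simp [hab]⟩
  refine Set.eq_univ_of_forall fun γ => ?_
  set T : ℤ := 2 + ∑ i, |γ i|
  have hd : 0 ≤ γ + T • α - (Pi.single a 1 + Pi.single b 1) := fun i => by
    have hγi : |γ i| ≤ ∑ i, |γ i| :=
      Finset.single_le_sum (fun i _ => abs_nonneg (γ i)) (Finset.mem_univ i)
    have hTα : T ≤ T * α i := le_mul_of_one_le_right (by positivity) (hα i)
    have hsa : (Pi.single a 1 : ι → ℤ) i ≤ 1 := by rw [Pi.single_apply]; split_ifs <;> simp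
    have hsb : (Pi.single b 1 : ι → ℤ) i ≤ 1 := by rw [Pi.single_apply]; split_ifs <;> simp
    simp only [Pi.zero_apply, Pi.sub_apply, Pi.add_apply, Pi.smul_apply, smul_eq_mul]
    linarith [neg_abs_le (γ i)]
  have hT : -T ≤ N := by
    linarith [Finset.sum_nonneg fun i (_ : i ∈ Finset.univ) => abs_nonneg (γ i)]
  convert hpair.add_nonneg hS hN hα hsingle hpair_pos hd (-T) hT using 1
  module

end Generation

theorem eq_zero_of_forall_apply_eq_zero {R L V : Type*} [Ring R] [AddCommGroup V] [Module R V]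
    (ρ : L → Module.End R V) (gV : ZMod 2 → Submodule R V) {v : V} (hv : ∀ x, ρ x v = 0)
    (hsimple : ∀ P : Submodule R V, P = (P ⊓ gV 0) ⊔ (P ⊓ gV 1) →
      (∀ x, ∀ u ∈ P, ρ x u ∈ P) → P = ⊥ ∨ P = ⊤)
    (hhom : ∃ p, v ∈ gV p) (hnontriv : ∃ x u, ρ x u ≠ 0) : v = 0 := by
  obtain ⟨p, hvp⟩ := hhom
  obtain ⟨x, u, hxu⟩ := hnontriv
  have hgraded : R ∙ v = (R ∙ v ⊓ gV 0) ⊔ (R ∙ v ⊓ gV 1) := by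
    have hle : R ∙ v ≤ gV p := (Submodule.span_singleton_le_iff_mem _ _).2 hvp
    refine le_antisymm ?_ (sup_le inf_le_left inf_le_left)
    fin_cases p
    · exact le_sup_of_le_left (le_inf le_rfl hle)
    · exact le_sup_of_le_right (le_inf le_rfl hle)
  have hinv : ∀ y, ∀ w ∈ R ∙ v, ρ y w ∈ R ∙ v := by
    rintro y w hw
    obtain ⟨t, rfl⟩ := Submodule.mem_span_singleton.1 hw
    simp [hv]
  rcases hsimple _ hgraded hinv with hbot | htop
  · simpa using hbot
  · obtain ⟨t, rfl⟩ := Submodule.mem_span_singleton.1 (htop ▸ Submodule.mem_top : u ∈ R ∙ v)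
    simp [hv] at hxu

theorem stmt19_general (m n : ℕ) (hm : 1 < m) (V : Type*) [AddCommGroup V] [Module ℂ V]
    (gV : ZMod 2 → Submodule ℂ V)
    (ρ : WSp m n →ₗ[ℂ] Module.End ℂ V)
    (hrep : ∀ (p q : ℕ) (x y : WSp m n), x ∈ Wpar m n p → y ∈ Wpar m n q →
      ρ (bracketW m n x y) = ρ x * ρ y - ((-1 : ℂ) ^ (p * q)) • (ρ y * ρ x))
    (α : Fin m → ℤ) (hα : ∀ i, 0 < α i) (v : V)
    (h1 : ∀ x ∈ Wgr m n (-α), ρ x v = 0)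
    (N : ℕ)
    (h2 : ∀ i : Fin m, ∀ x ∈ Wgr m n (Pi.single i 1 + (N : ℤ) • α), ρ x v = 0) :
    (∀ x : WSp m n, ρ x v = 0) ∧
    ((∀ P : Submodule ℂ V, P = (P ⊓ gV 0) ⊔ (P ⊓ gV 1) →
        (∀ x : WSp m n, ∀ u ∈ P, ρ x u ∈ P) → P = ⊥ ∨ P = ⊤) →
      (∃ p : ZMod 2, v ∈ gV p) →
      (∃ (x : WSp m n) (u : V), ρ x u ≠ 0) →
      v = 0) := by
  have : Nontrivial (Fin m) := Fin.nontrivial_iff_two_le.2 hm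
  have hS : IsClosedUnderDistinctAdd {γ | Annihilates ρ v γ} :=
    fun μ hμ β hβ hne => Annihilates.add hrep hμ hβ hne
  have hall := eq_univ_of_isClosedUnderDistinctAdd hS (Int.natCast_nonneg N) hα
    (fun I c => h1 _ (Submodule.subset_span ⟨I, c, rfl⟩))
    (fun i I c => h2 i _ (Submodule.subset_span ⟨I, c, rfl⟩))
  have hv : ∀ x : WSp m n, ρ x v = 0 :=
    apply_eq_zero_of_forall_annihilates (Set.eq_univ_iff_forall.1 hall)
  exact ⟨hv, eq_zero_of_forall_apply_eq_zero ρ gV hv⟩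

/-- Let `W = W_{m,n}` with `m > 1`, let `M` be a module over the Lie superalgebra `W`
and `v ∈ M`, and let `α ∈ ℕ^m` (all coordinates positive).  If `W_{-α} · v = 0` and
there is `N ∈ ℕ` with `W_{e_i + Nα} · v = 0` for `i = 1, …, m`, then `W · v = 0`,
i.e. `v` spans a trivial submodule.  Consequently, if `M` is simple (no nontrivial
graded invariant subspace), `v` is homogeneous, and the action of `W` on `M` is
nontrivial, then `v = 0`; in particular `W_{-α} v ≠ 0` for every nonzero homogeneous
`v` satisfying the vanishing hypothesis on the `W_{e_i + Nα}`. -/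
theorem stmt19 (m n : ℕ) (hm : 1 < m) (V : Type*) [AddCommGroup V] [Module ℂ V]
    (gV : ZMod 2 → Submodule ℂ V) (hcompl : IsCompl (gV 0) (gV 1))
    (ρ : WSp m n →ₗ[ℂ] Module.End ℂ V)
    (hpar : ∀ (p : ℕ) (x : WSp m n), x ∈ Wpar m n p →
      ∀ q : ZMod 2, ∀ v ∈ gV q, ρ x v ∈ gV (q + (p : ZMod 2)))
    (hrep : ∀ (p q : ℕ) (x y : WSp m n), x ∈ Wpar m n p → y ∈ Wpar m n q →
      ρ (bracketW m n x y) = ρ x * ρ y - ((-1 : ℂ) ^ (p * q)) • (ρ y * ρ x))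
    (α : Fin m → ℤ) (hα : ∀ i, 0 < α i) (v : V)
    (h1 : ∀ x ∈ Wgr m n (-α), ρ x v = 0)
    (N : ℕ)
    (h2 : ∀ i : Fin m, ∀ x ∈ Wgr m n (Pi.single i 1 + (N : ℤ) • α), ρ x v = 0) :
    (∀ x : WSp m n, ρ x v = 0) ∧
    ((∀ P : Submodule ℂ V, P = (P ⊓ gV 0) ⊔ (P ⊓ gV 1) →
        (∀ x : WSp m n, ∀ u ∈ P, ρ x u ∈ P) → P = ⊥ ∨ P = ⊤) →
      (∃ p : ZMod 2, v ∈ gV p) →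
      (∃ (x : WSp m n) (u : V), ρ x u ≠ 0) →
      v = 0) :=
  stmt19_general m n hm V gV ρ hrep α hα v h1 N h2
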